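/- Let 0 ≤ γ < 1 and 0 ≤ k ≤ 1. For every r with (1+γ)/(3+2k+γ) < r < 1, there exist h analytic on Ω_γ with |h(z)| ≤ 1 on Ω_γ and Taylor coefficients (a_n) at 0, and g analytic on Ω_γ with g(0) = 0, Taylor coefficients (b_n) at 0, and |g'(z)| ≤ k·|h'(z)| for all z ∈ 𝔻, such that Σ_{n≥0} |a_n| r^n + Σ_{n≥1} |b_n| r^n > 1. In other words, the radius (1+γ)/(3+2k+γ) in the harmonic Bohr inequality is best possible. -/

import Mathlib

open Complex ComplexConjugate Metric Topology

/-!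
The extremal pair is `h = φ_A ∘ w` and `g = k (h - h 0)`, where `w z = (1 - γ) z + γ` maps `Ω_γ`
onto `𝔻` and `φ_A w = (A - w) / (1 - A w)` is a disc automorphism with `γ ≤ A < 1`. Then
`h z = a₀ - c z / (1 - β z)` with `a₀ = (A - γ)/(1 - Aγ)`, `β = A(1 - γ)/(1 - Aγ)` and
`c = (1 - γ)(1 - A²)/(1 - Aγ)²`, all nonnegative, so the Bohr sum is `a₀ + (1 + k) c r / (1 - β r)`.
Its excess over `1` is `(1 - A)/(1 - Aγ)` times a quantity that tends, as `A → 1⁻`, to a positive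
multiple of `(3 + 2k + γ) r - (1 + γ)`.
-/

section ShiftedGeometric

variable {𝕜 : Type*} [NormedField 𝕜]

def shiftedGeometric (a₀ d β : 𝕜) : ℕ → 𝕜
  | 0 => a₀
  | n + 1 => d * β ^ n

@[simp]
lemma shiftedGeometric_zero (a₀ d β : 𝕜) : shiftedGeometric a₀ d β 0 = a₀ := rfl

@[simp]
lemma shiftedGeometric_succ (a₀ d β : 𝕜) (n : ℕ) :
    shiftedGeometric a₀ d β (n + 1) = d * β ^ n := rfl

lemma hasSum_shiftedGeometric {a₀ d β z : 𝕜} (h : ‖β * z‖ < 1) :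
    HasSum (fun n ↦ shiftedGeometric a₀ d β n * z ^ n) (a₀ + d * z / (1 - β * z)) := by
  rw [← hasSum_nat_add_iff' 1]
  simp only [Finset.sum_range_one, shiftedGeometric_zero, shiftedGeometric_succ, pow_zero,
    mul_one, add_sub_cancel_left, div_eq_mul_inv]
  have e : (fun n ↦ d * β ^ n * z ^ (n + 1)) = fun n ↦ d * z * (β * z) ^ n := by
    funext n
    ring
  exact e ▸ (hasSum_geometric_of_norm_lt_one h).mul_left (d * z)

lemma norm_shiftedGeometric (a₀ d β : 𝕜) (n : ℕ) :
    ‖shiftedGeometric a₀ d β n‖ = shiftedGeometric ‖a₀‖ ‖d‖ ‖β‖ n := by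
  cases n <;> simp

lemma HasSum.shiftedGeometric_sub_const {a₀ d β z s : 𝕜} (k : 𝕜)
    (h : HasSum (fun n ↦ shiftedGeometric a₀ d β n * z ^ n) s) :
    HasSum (fun n ↦ shiftedGeometric 0 (k * d) β n * z ^ n) (k * (s - a₀)) := by
  rw [← hasSum_nat_add_iff' 1] at h ⊢
  simp only [Finset.sum_range_one, shiftedGeometric_zero, shiftedGeometric_succ, pow_zero,
    mul_one, sub_zero] at h ⊢
  have e : (fun n ↦ k * d * β ^ n * z ^ (n + 1)) = fun n ↦ k * (d * β ^ n * z ^ (n + 1)) := by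
    funext n
    ring
  exact e ▸ h.mul_left k

lemma tsum_norm_shiftedGeometric_mul_pow {a₀ d β : 𝕜} {r : ℝ} (hr : 0 ≤ r)
    (h : ‖β‖ * r < 1) :
    ∑' n, ‖shiftedGeometric a₀ d β n‖ * r ^ n = ‖a₀‖ + ‖d‖ * r / (1 - ‖β‖ * r) := by
  simp_rw [norm_shiftedGeometric]
  exact (hasSum_shiftedGeometric (by rwa [Real.norm_of_nonneg (by positivity)])).tsum_eq

lemma tsum_norm_shiftedGeometric_succ_mul_pow {a₀ d β : 𝕜} {r : ℝ} (hr : 0 ≤ r)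
    (h : ‖β‖ * r < 1) :
    ∑' n, ‖shiftedGeometric a₀ d β (n + 1)‖ * r ^ (n + 1) = ‖d‖ * r / (1 - ‖β‖ * r) := by
  simp_rw [norm_shiftedGeometric]
  have hsum := hasSum_shiftedGeometric (a₀ := ‖a₀‖) (d := ‖d‖)
    (by rwa [Real.norm_of_nonneg (by positivity)] : ‖‖β‖ * r‖ < 1)
  simpa using ((hasSum_nat_add_iff' 1).2 hsum).tsum_eq

end ShiftedGeometric

namespace Complex

lemma normSq_one_sub_conj_mul_sub_normSq_sub (a w : ℂ) :
    normSq (1 - conj a * w) - normSq (a - w) = (1 - normSq a) * (1 - normSq w) := by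
  simp only [normSq_apply, sub_re, sub_im, mul_re, mul_im, conj_re, conj_im, one_re, one_im]
  ring

lemma norm_sub_le_norm_one_sub_conj_mul {a w : ℂ} (ha : ‖a‖ ≤ 1) (hw : ‖w‖ ≤ 1) :
    ‖a - w‖ ≤ ‖1 - conj a * w‖ := by
  rw [← sq_le_sq₀ (norm_nonneg _) (norm_nonneg _), Complex.sq_norm, Complex.sq_norm]
  have ha' : normSq a ≤ 1 := by rw [← Complex.sq_norm]; exact pow_le_one₀ (norm_nonneg _) ha
  have hw' : normSq w ≤ 1 := by rw [← Complex.sq_norm]; exact pow_le_one₀ (norm_nonneg _) hw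
  nlinarith [normSq_one_sub_conj_mul_sub_normSq_sub a w,
    mul_nonneg (sub_nonneg.2 ha') (sub_nonneg.2 hw')]

lemma one_sub_conj_mul_ne_zero {a w : ℂ} (ha : ‖a‖ ≤ 1) (hw : ‖w‖ < 1) :
    1 - conj a * w ≠ 0 := by
  refine sub_ne_zero.2 fun h ↦ ?_
  have := congrArg norm h
  rw [norm_one, norm_mul, RCLike.norm_conj] at this
  nlinarith [norm_nonneg a, norm_nonneg w]

end Complex

lemma norm_one_sub_mul_add_lt_one {γ : ℝ} (hγ : γ < 1) {z : ℂ}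
    (hz : z ∈ ball (-(γ / (1 - γ)) : ℂ) (1 / (1 - γ))) : ‖(1 - γ) * z + γ‖ < 1 := by
  have hγ' : 0 < 1 - γ := sub_pos.2 hγ
  have hγC : (1 - γ : ℂ) ≠ 0 := by exact_mod_cast hγ'.ne'
  rw [mem_ball, dist_eq] at hz
  calc ‖(1 - γ) * z + γ‖ = (1 - γ) * ‖z - -(γ / (1 - γ))‖ := by
        rw [← Real.norm_of_nonneg hγ'.le, ← norm_real, ← norm_mul]
        congr 1
        push_cast
        field_simp
        ring
    _ < (1 - γ) * (1 / (1 - γ)) := by gcongr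
    _ = 1 := by field_simp

lemma ball_zero_one_subset_ball {γ : ℝ} (hγ₀ : 0 ≤ γ) (hγ₁ : γ < 1) :
    ball (0 : ℂ) 1 ⊆ ball (-(γ / (1 - γ)) : ℂ) (1 / (1 - γ)) := by
  have hγ' : 0 < 1 - γ := sub_pos.2 hγ₁
  refine ball_subset_ball' (le_of_eq ?_)
  rw [dist_zero_left, norm_neg, ← ofReal_one, ← ofReal_sub, ← ofReal_div, norm_real,
    Real.norm_of_nonneg (div_nonneg hγ₀ hγ'.le)]
  field_simp
  ring

noncomputable def bohrExtremal (γ A : ℝ) (z : ℂ) : ℂ :=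
  (A - ((1 - γ) * z + γ)) / (1 - A * ((1 - γ) * z + γ))

namespace BohrExtremal

noncomputable def constCoeff (γ A : ℝ) : ℝ := (A - γ) / (1 - A * γ)

noncomputable def scale (γ A : ℝ) : ℝ := (1 - γ) * (1 - A ^ 2) / (1 - A * γ) ^ 2

noncomputable def ratio (γ A : ℝ) : ℝ := A * (1 - γ) / (1 - A * γ)

variable {γ A : ℝ}

lemma constCoeff_nonneg (hγ : 0 ≤ γ) (hγA : γ ≤ A) (hA : A < 1) : 0 ≤ constCoeff γ A :=
  div_nonneg (by linarith) (by nlinarith)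

lemma scale_nonneg (hγ : 0 ≤ γ) (hγA : γ ≤ A) (hA : A < 1) : 0 ≤ scale γ A :=
  div_nonneg (mul_nonneg (by linarith) (by nlinarith)) (by positivity)

lemma ratio_nonneg (hγ : 0 ≤ γ) (hγA : γ ≤ A) (hA : A < 1) : 0 ≤ ratio γ A :=
  div_nonneg (by nlinarith) (by nlinarith)

lemma ratio_lt_one (hγ : 0 ≤ γ) (hγA : γ ≤ A) (hA : A < 1) : ratio γ A < 1 :=
  (div_lt_one (by nlinarith)).2 (by nlinarith)

end BohrExtremal

open BohrExtremal

section

variable {γ A : ℝ}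

lemma one_sub_mul_ne_zero_of_abs_le_one (hA : |A| ≤ 1) {w : ℂ} (hw : ‖w‖ < 1) :
    1 - A * w ≠ 0 := by
  simpa using Complex.one_sub_conj_mul_ne_zero (a := A) (by simpa using hA) hw

lemma differentiableOn_bohrExtremal (hγ : γ < 1) (hA : |A| ≤ 1) :
    DifferentiableOn ℂ (bohrExtremal γ A) (ball (-(γ / (1 - γ)) : ℂ) (1 / (1 - γ))) :=
  fun z hz ↦ DifferentiableAt.differentiableWithinAt <| by
    unfold bohrExtremal
    exact .div (by fun_prop) (by fun_prop)
      (one_sub_mul_ne_zero_of_abs_le_one hA (norm_one_sub_mul_add_lt_one hγ hz))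

lemma norm_bohrExtremal_le_one (hγ : γ < 1) (hA : |A| ≤ 1) {z : ℂ}
    (hz : z ∈ ball (-(γ / (1 - γ)) : ℂ) (1 / (1 - γ))) : ‖bohrExtremal γ A z‖ ≤ 1 := by
  have hw := norm_one_sub_mul_add_lt_one hγ hz
  rw [bohrExtremal, norm_div,
    div_le_one (norm_pos_iff.2 (one_sub_mul_ne_zero_of_abs_le_one hA hw))]
  simpa using Complex.norm_sub_le_norm_one_sub_conj_mul (a := A) (by simpa using hA) hw.le

lemma bohrExtremal_zero : bohrExtremal γ A 0 = constCoeff γ A := by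
  simp [bohrExtremal, constCoeff]

lemma bohrExtremal_eq (hAγ : A * γ ≠ 1) {z : ℂ} (hz : 1 - A * ((1 - γ) * z + γ) ≠ 0) :
    bohrExtremal γ A z = constCoeff γ A + (-scale γ A : ℝ) * z / (1 - ratio γ A * z) := by
  have h₁ : (1 - A * γ : ℂ) ≠ 0 := by exact_mod_cast sub_ne_zero.2 hAγ.symm
  have h₂ : (1 - A * γ : ℂ) - A * (1 - γ) * z ≠ 0 := by convert hz using 1; ring
  rw [bohrExtremal, constCoeff, scale, ratio]
  push_cast
  field_simp
  ring

lemma hasSum_bohrExtremal (hγ : 0 ≤ γ) (hγA : γ ≤ A) (hA : A < 1) {z : ℂ}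
    (hz : z ∈ ball (0 : ℂ) 1) :
    HasSum (fun n ↦ shiftedGeometric (constCoeff γ A : ℂ) (-scale γ A : ℝ) (ratio γ A) n * z ^ n)
      (bohrExtremal γ A z) := by
  have hA' : |A| ≤ 1 := abs_le.2 ⟨by linarith, hA.le⟩
  have hw := norm_one_sub_mul_add_lt_one (hγA.trans_lt hA) (ball_zero_one_subset_ball hγ
    (hγA.trans_lt hA) hz)
  rw [bohrExtremal_eq (by nlinarith) (one_sub_mul_ne_zero_of_abs_le_one hA' hw)]
  refine hasSum_shiftedGeometric ?_
  rw [norm_mul, norm_real, Real.norm_of_nonneg (ratio_nonneg hγ hγA hA)]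
  exact (mul_le_of_le_one_left (norm_nonneg z) (ratio_lt_one hγ hγA hA).le).trans_lt
    (mem_ball_zero_iff.1 hz)

end

lemma exists_bohrExtremal_parameter {γ k r : ℝ} (hγ : γ < 1)
    (hr : 1 + γ < (3 + 2 * k + γ) * r) :
    ∃ A, γ ≤ A ∧ A < 1 ∧
      (1 + γ) * (1 - A * γ - A * (1 - γ) * r) < (1 + k) * (1 - γ) * (1 + A) * r := by
  have hAt1 : (1 + γ) * (1 - 1 * γ - 1 * (1 - γ) * r) < (1 + k) * (1 - γ) * (1 + 1) * r := by
    nlinarith [mul_pos (sub_pos.2 hγ) (sub_pos.2 hr)]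
  have hnear : ∀ᶠ A in 𝓝 1,
      (1 + γ) * (1 - A * γ - A * (1 - γ) * r) < (1 + k) * (1 - γ) * (1 + A) * r :=
    ContinuousAt.eventually_lt (by fun_prop) (by fun_prop) hAt1
  obtain ⟨A, hA, hAγ⟩ := ((hnear.filter_mono nhdsWithin_le_nhds).and (Ioo_mem_nhdsLT hγ)).exists
  exact ⟨A, hAγ.1.le, hAγ.2, hA⟩

lemma one_lt_bohrExtremal_majorant {γ A k r : ℝ} (hγ : 0 ≤ γ) (hγA : γ ≤ A) (hA : A < 1)
    (hr₀ : 0 ≤ r) (hr₁ : r < 1)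
    (hkey : (1 + γ) * (1 - A * γ - A * (1 - γ) * r) < (1 + k) * (1 - γ) * (1 + A) * r) :
    1 < constCoeff γ A + scale γ A * r / (1 - ratio γ A * r)
      + k * scale γ A * r / (1 - ratio γ A * r) := by
  have hD : 0 < 1 - A * γ := by nlinarith
  have hE : 0 < 1 - A * γ - A * (1 - γ) * r := by nlinarith [mul_nonneg (hγ.trans hγA) hr₀]
  have hexcess : constCoeff γ A + scale γ A * r / (1 - ratio γ A * r)
      + k * scale γ A * r / (1 - ratio γ A * r) - 1 = (1 - A) / (1 - A * γ) *
        (((1 + k) * (1 - γ) * (1 + A) * r - (1 + γ) * (1 - A * γ - A * (1 - γ) * r))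
          / (1 - A * γ - A * (1 - γ) * r)) := by
    rw [constCoeff, scale, ratio]
    field_simp
    ring
  have := mul_pos (div_pos (sub_pos.2 hA) hD) (div_pos (sub_pos.2 hkey) hE)
  linarith

theorem bohr_harmonic_omega_gamma_sharp_general (γ : ℝ) (hγ₀ : 0 ≤ γ) (hγ₁ : γ < 1)
    (k : ℝ) (hk₀ : 0 ≤ k)
    (r : ℝ) (hr₀ : (1 + γ) / (3 + 2 * k + γ) < r) (hr₁ : r < 1) :
    ∃ (h g : ℂ → ℂ) (a b : ℕ → ℂ),
      DifferentiableOn ℂ h (Metric.ball (-(γ / (1 - γ)) : ℂ) (1 / (1 - γ))) ∧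
      (∀ z ∈ Metric.ball (-(γ / (1 - γ)) : ℂ) (1 / (1 - γ)), ‖h z‖ ≤ 1) ∧
      DifferentiableOn ℂ g (Metric.ball (-(γ / (1 - γ)) : ℂ) (1 / (1 - γ))) ∧
      g 0 = 0 ∧ b 0 = 0 ∧
      (∀ z ∈ Metric.ball (0 : ℂ) 1, HasSum (fun n => a n * z ^ n) (h z)) ∧
      (∀ z ∈ Metric.ball (0 : ℂ) 1, HasSum (fun n => b n * z ^ n) (g z)) ∧
      (∀ z ∈ Metric.ball (0 : ℂ) 1,
        ‖deriv g z‖ ≤ k * ‖deriv h z‖) ∧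
      1 < (∑' n : ℕ, ‖a n‖ * r ^ n)
        + (∑' n : ℕ, ‖b (n + 1)‖ * r ^ (n + 1)) := by
  have hden : 0 < 3 + 2 * k + γ := by linarith
  have hr : 0 ≤ r := (div_pos (by linarith) hden).le.trans hr₀.le
  obtain ⟨A, hγA, hA₁, hkey⟩ :=
    exists_bohrExtremal_parameter (k := k) hγ₁ (by rwa [div_lt_iff₀ hden, mul_comm] at hr₀)
  have hA : |A| ≤ 1 := abs_le.2 ⟨by linarith, hA₁.le⟩
  have hβ₀ := ratio_nonneg hγ₀ hγA hA₁
  have hβr : ‖(ratio γ A : ℂ)‖ * r < 1 := by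
    rw [norm_real, Real.norm_of_nonneg hβ₀]
    exact (mul_le_of_le_one_right hβ₀ hr₁.le).trans_lt (ratio_lt_one hγ₀ hγA hA₁)
  refine ⟨bohrExtremal γ A, fun z ↦ k * (bohrExtremal γ A z - bohrExtremal γ A 0),
    shiftedGeometric (constCoeff γ A : ℂ) (-scale γ A : ℝ) (ratio γ A),
    shiftedGeometric 0 (k * (-scale γ A : ℝ)) (ratio γ A),
    differentiableOn_bohrExtremal hγ₁ hA, fun z hz ↦ norm_bohrExtremal_le_one hγ₁ hA hz,
    ((differentiableOn_bohrExtremal hγ₁ hA).sub_const _).const_mul _, by simp, rfl,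
    fun z hz ↦ hasSum_bohrExtremal hγ₀ hγA hA₁ hz, fun z hz ↦ ?_, fun z _ ↦ ?_, ?_⟩
  · rw [bohrExtremal_zero]
    exact (hasSum_bohrExtremal hγ₀ hγA hA₁ hz).shiftedGeometric_sub_const _
  · rw [deriv_const_mul_field, deriv_sub_const, norm_mul, norm_real, Real.norm_of_nonneg hk₀]
  · rw [tsum_norm_shiftedGeometric_mul_pow hr hβr, tsum_norm_shiftedGeometric_succ_mul_pow hr hβr]
    simp only [norm_real, norm_mul, norm_neg, Real.norm_of_nonneg hk₀, Real.norm_of_nonneg hβ₀,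
      Real.norm_of_nonneg (constCoeff_nonneg hγ₀ hγA hA₁),
      Real.norm_of_nonneg (scale_nonneg hγ₀ hγA hA₁)]
    exact one_lt_bohrExtremal_majorant hγ₀ hγA hA₁ hr hr₁ hkey

/-- **Sharpness in Theorem 4.** Let `0 ≤ γ < 1` and `0 ≤ k ≤ 1`. For every `r` with
`(1+γ)/(3+2k+γ) < r < 1` there exist `h` analytic on `Ω_γ` with `|h| ≤ 1` and coefficients
`a_n`, and `g` analytic on `Ω_γ` with `g(0)=0`, coefficients `b_n`, and `|g'| ≤ k|h'|` on `𝔻`,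
such that `Σ |a_n| r^n + Σ_{n≥1} |b_n| r^n > 1`; hence `(1+γ)/(3+2k+γ)` is best possible. -/
theorem bohr_harmonic_omega_gamma_sharp (γ : ℝ) (hγ₀ : 0 ≤ γ) (hγ₁ : γ < 1)
    (k : ℝ) (hk₀ : 0 ≤ k) (hk₁ : k ≤ 1)
    (r : ℝ) (hr₀ : (1 + γ) / (3 + 2 * k + γ) < r) (hr₁ : r < 1) :
    ∃ (h g : ℂ → ℂ) (a b : ℕ → ℂ),
      DifferentiableOn ℂ h (Metric.ball (-(γ / (1 - γ)) : ℂ) (1 / (1 - γ))) ∧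
      (∀ z ∈ Metric.ball (-(γ / (1 - γ)) : ℂ) (1 / (1 - γ)), ‖h z‖ ≤ 1) ∧
      DifferentiableOn ℂ g (Metric.ball (-(γ / (1 - γ)) : ℂ) (1 / (1 - γ))) ∧
      g 0 = 0 ∧ b 0 = 0 ∧
      (∀ z ∈ Metric.ball (0 : ℂ) 1, HasSum (fun n => a n * z ^ n) (h z)) ∧
      (∀ z ∈ Metric.ball (0 : ℂ) 1, HasSum (fun n => b n * z ^ n) (g z)) ∧
      (∀ z ∈ Metric.ball (0 : ℂ) 1,
        ‖deriv g z‖ ≤ k * ‖deriv h z‖) ∧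
      1 < (∑' n : ℕ, ‖a n‖ * r ^ n)
        + (∑' n : ℕ, ‖b (n + 1)‖ * r ^ (n + 1)) :=
  bohr_harmonic_omega_gamma_sharp_general γ hγ₀ hγ₁ k hk₀ r hr₀ hr₁
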